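/- Let L/K be a finite separable field extension with F_q ⊆ K such that F_q is algebraically closed in L but, for every non-identity K-embedding σ of L into the Galois closure N of L/K, F_q is not algebraically closed in the compositum L·σ(L) (the 'Lenstra property'). Let F_{q^ℓ} be the algebraic closure of F_q in N, A = Gal(N/K), G = Gal(N/F_{q^ℓ}·K), A1 = Gal(N/L), G1 = Gal(N/F_{q^ℓ}·L). Then {A1} is the unique orbit on the coset space A/A1 that is both an A1-orbit and a G1-orbit. -/

import Mathlib

open Polynomial IntermediateField
open scoped Pointwise

lemma aux_monic_XpowsubX (R : Type*) [Field R] (c' : ℕ) :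
    ((X : R[X]) ^ (c' + 2) - X).Monic :=
  Polynomial.monic_X_pow_sub (by
    rw [Polynomial.degree_X]
    norm_cast
    omega)

/-- Coefficients of the minimal polynomial (over any intermediate base `E`) of an element
algebraic over a finite field `k` are themselves algebraic over `k`. -/
lemma aux_coeff_minpoly {k E N : Type*} [Field k] [Finite k] [Field E] [Field N]
    [Algebra k E] [Algebra E N] [Algebra k N] [IsScalarTower k E N]
    {x : N} (hx : IsAlgebraic k x) (j : ℕ) :
    IsAlgebraic k (((minpoly E x).map (algebraMap E N)).coeff j) := by
  classical
  have hxi : IsIntegral k x := hx.isIntegral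
  have : FiniteDimensional k k⟮x⟯ := IntermediateField.adjoin.finiteDimensional hxi
  have : Finite k⟮x⟯ := Module.finite_of_finite k
  letI : Fintype k⟮x⟯ := Fintype.ofFinite _
  obtain ⟨c, hcdef⟩ : ∃ c, c = Fintype.card k⟮x⟯ := ⟨_, rfl⟩
  have hc2 : 2 ≤ c := hcdef ▸ Fintype.one_lt_card
  have hxc : x ^ c = x := by
    have := FiniteField.pow_card (IntermediateField.AdjoinSimple.gen k x)
    have := congrArg (algebraMap k⟮x⟯ N) this
    simpa [map_pow, hcdef] using this
  obtain ⟨c', rfl⟩ : ∃ c', c = c' + 2 := ⟨c - 2, by omega⟩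
  -- monicity of X^c - X over any field
  have hdvd : minpoly E x ∣ (X : E[X]) ^ (c' + 2) - X := by
    apply minpoly.dvd
    simp [hxc]
  -- pass to a splitting field of X^c - X over N
  set P : N[X] := X ^ (c' + 2) - X with hP
  letI Ω := P.SplittingField
  set g : N[X] := (minpoly E x).map (algebraMap E N) with hg
  set gΩ : Polynomial Ω := g.map (algebraMap N Ω) with hgΩ
  have hmonΩ : ((X : Polynomial Ω) ^ (c' + 2) - X).Monic := aux_monic_XpowsubX Ω c'
  have hdvdΩ : gΩ ∣ (X : Polynomial Ω) ^ (c' + 2) - X := by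
    have h1 : g ∣ P := by
      have := Polynomial.map_dvd (algebraMap E N) hdvd
      simpa [hP, Polynomial.map_sub, Polynomial.map_pow] using this
    have := Polynomial.map_dvd (algebraMap N Ω) h1
    simpa [hP, Polynomial.map_sub, Polynomial.map_pow] using this
  have hsplits : ((X : Polynomial Ω) ^ (c' + 2) - X).Splits := by
    have := Polynomial.SplittingField.splits P
    rwa [hP, Polynomial.map_sub, Polynomial.map_pow,
      Polynomial.map_X] at this
  have hgΩsplits : gΩ.Splits :=
    Polynomial.Splits.of_dvd hsplits hmonΩ.ne_zero hdvdΩ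
  have hgΩmonic : gΩ.Monic := ((minpoly.monic (hxi.tower_top (A := E))).map _).map _
  -- all roots of gΩ are integral over k
  have hroots : ∀ r ∈ gΩ.roots, r ∈ (algebraMap (integralClosure k Ω) Ω).range := by
    intro r hr
    have hr' : r ∈ ((X : Polynomial Ω) ^ (c' + 2) - X).roots :=
      Multiset.mem_of_le (Polynomial.roots.le_of_dvd hmonΩ.ne_zero hdvdΩ) hr
    have hre : r ^ (c' + 2) - r = 0 := by
      have := Polynomial.isRoot_of_mem_roots hr'
      simpa [Polynomial.IsRoot, Polynomial.eval_sub, Polynomial.eval_pow] using this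
    have hint : IsIntegral k r := by
      refine ⟨(X : k[X]) ^ (c' + 2) - X, aux_monic_XpowsubX k c', ?_⟩
      simpa [Polynomial.eval₂_sub, Polynomial.eval₂_pow] using hre
    exact ⟨⟨r, hint⟩, rfl⟩
  have hlift : gΩ ∈ Polynomial.lifts (algebraMap (integralClosure k Ω) Ω) :=
    Polynomial.Splits.mem_lift_of_roots_mem_range hgΩsplits hgΩmonic _ hroots
  rw [Polynomial.lifts_iff_coeff_lifts] at hlift
  obtain ⟨r, hr⟩ := hlift j
  have hint : IsIntegral k (gΩ.coeff j) := hr ▸ r.2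
  have : gΩ.coeff j = algebraMap N Ω (g.coeff j) := by
    rw [hgΩ, Polynomial.coeff_map]
  rw [this] at hint
  exact (isAlgebraic_algebraMap_iff (algebraMap N Ω).injective).mp hint.isAlgebraic

/-- If `k` is algebraically closed in `E` (viewed inside `N`), then the minimal polynomial of an
element of `N` algebraic over `k` has the same degree over `E` as over `k`. -/
lemma aux_minpoly_natDegree_eq {k E N : Type*} [Field k] [Finite k] [Field E] [Field N]
    [Algebra k E] [Algebra E N] [Algebra k N] [IsScalarTower k E N]
    (halgE : ∀ y : N, IsAlgebraic k y → y ∈ Set.range (algebraMap E N) →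
      ∃ c : k, algebraMap k N c = y)
    {x : N} (hx : IsAlgebraic k x) :
    (minpoly E x).natDegree = (minpoly k x).natDegree := by
  have hxi : IsIntegral k x := hx.isIntegral
  have hxiE : IsIntegral E x := hxi.tower_top
  set g : N[X] := (minpoly E x).map (algebraMap E N) with hg
  have hgmonic : g.Monic := (minpoly.monic hxiE).map _
  -- g lifts to a monic polynomial over k
  have hlift : g ∈ Polynomial.lifts (algebraMap k N) := by
    rw [Polynomial.lifts_iff_coeff_lifts]
    intro n
    have h1 : IsAlgebraic k (g.coeff n) := aux_coeff_minpoly hx n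
    have h2 : g.coeff n ∈ Set.range (algebraMap E N) := by
      rw [hg, Polynomial.coeff_map]
      exact ⟨_, rfl⟩
    obtain ⟨c, hc⟩ := halgE _ h1 h2
    exact ⟨c, hc⟩
  obtain ⟨p, hpmap, hpdeg, hpmonic⟩ :=
    Polynomial.lifts_and_degree_eq_and_monic hlift hgmonic
  have happ : Polynomial.aeval x p = 0 := by
    have : Polynomial.aeval x p = Polynomial.eval x (p.map (algebraMap k N)) := by
      rw [Polynomial.aeval_def, Polynomial.eval_map]
    rw [this, hpmap, hg, Polynomial.eval_map, ← Polynomial.aeval_def, minpoly.aeval]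
  have hle1 : (minpoly k x).natDegree ≤ (minpoly E x).natDegree := by
    have hdvd := minpoly.dvd k x happ
    have := Polynomial.natDegree_le_of_dvd hdvd hpmonic.ne_zero
    have hdeg : p.natDegree = g.natDegree := Polynomial.natDegree_eq_of_degree_eq hpdeg
    rw [hdeg] at this
    rwa [hg, Polynomial.natDegree_map] at this
  have hle2 : (minpoly E x).natDegree ≤ (minpoly k x).natDegree := by
    have hdvd := minpoly.dvd_map_of_isScalarTower k E x
    have hne : ((minpoly k x).map (algebraMap k E)) ≠ 0 :=
      ((minpoly.monic hxi).map _).ne_zero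
    have := Polynomial.natDegree_le_of_dvd hdvd hne
    rwa [Polynomial.natDegree_map] at this
  omega

lemma aux_finite_pow_fixed {N : Type*} [Field N] {c : ℕ} (hc : 2 ≤ c) :
    {y : N | y ^ c = y}.Finite := by
  obtain ⟨c', rfl⟩ : ∃ c', c = c' + 2 := ⟨c - 2, by omega⟩
  refine (Polynomial.finite_setOf_isRoot (aux_monic_XpowsubX N c').ne_zero).subset ?_
  intro y hy
  simp only [Set.mem_setOf_eq] at hy ⊢
  simp [Polynomial.IsRoot, hy, sub_eq_zero]

lemma aux_S_finite {k K N : Type*} [Field k] [Finite k] [Field K] [Field N]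
    [Algebra k K] [Algebra K N] [Algebra k N] [IsScalarTower k K N] [FiniteDimensional K N]
    (halgK : ∀ y : N, IsAlgebraic k y → y ∈ Set.range (algebraMap K N) →
      ∃ c : k, algebraMap k N c = y) :
    {x : N | IsAlgebraic k x}.Finite := by
  classical
  letI : Fintype k := Fintype.ofFinite k
  set q : ℕ := Fintype.card k with hq
  have hq2 : 2 ≤ q := Fintype.one_lt_card
  set n : ℕ := Module.finrank K N with hn
  have hsub : {x : N | IsAlgebraic k x} ⊆
      ⋃ m ∈ Finset.Icc 1 n, {y : N | y ^ q ^ m = y} := by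
    intro x hx
    have hx' : IsAlgebraic k x := hx
    have hxi : IsIntegral k x := hx'.isIntegral
    have hdeq : (minpoly K x).natDegree = (minpoly k x).natDegree :=
      aux_minpoly_natDegree_eq halgK hx'
    have hdle : (minpoly K x).natDegree ≤ n := minpoly.natDegree_le x
    haveI : FiniteDimensional k k⟮x⟯ := IntermediateField.adjoin.finiteDimensional hxi
    have hm : Module.finrank k k⟮x⟯ = (minpoly k x).natDegree :=
      IntermediateField.adjoin.finrank hxi
    have hm1 : 1 ≤ Module.finrank k k⟮x⟯ := Module.finrank_pos
    haveI : Finite k⟮x⟯ := Module.finite_of_finite k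
    letI : Fintype k⟮x⟯ := Fintype.ofFinite _
    have hcard : Fintype.card k⟮x⟯ = q ^ Module.finrank k k⟮x⟯ :=
      Module.card_eq_pow_finrank
    have hxc : x ^ q ^ Module.finrank k k⟮x⟯ = x := by
      have := FiniteField.pow_card (IntermediateField.AdjoinSimple.gen k x)
      have := congrArg (algebraMap k⟮x⟯ N) this
      simpa [map_pow, hcard] using this
    exact Set.mem_biUnion (Finset.mem_coe.mpr (Finset.mem_Icc.mpr ⟨hm1, by omega⟩)) hxc
  refine (Set.Finite.biUnion (Finset.finite_toSet _) fun m hm => ?_).subset hsub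
  have hm1 : 1 ≤ m := (Finset.mem_Icc.mp hm).1
  exact aux_finite_pow_fixed (by
    calc 2 ≤ q := hq2
    _ = q ^ 1 := (pow_one q).symm
    _ ≤ q ^ m := Nat.pow_le_pow_right (by omega) hm1)

/-- The subfield of elements fixed by a single `K`-algebra automorphism. -/
def fixedPts {K N : Type*} [Field K] [Field N] [Algebra K N] (y : N ≃ₐ[K] N) :
    IntermediateField K N where
  toSubalgebra := AlgHom.equalizer (y : N →ₐ[K] N) (AlgHom.id K N)
  inv_mem' := fun x hx => by
    have hx' : y x = x := hx
    show y x⁻¹ = x⁻¹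
    rw [map_inv₀, hx']

lemma mem_fixedPts {K N : Type*} [Field K] [Field N] [Algebra K N] {y : N ≃ₐ[K] N} {x : N} :
    x ∈ fixedPts y ↔ y x = x := Iff.rfl

/-- An orbit of a subgroup `H' ≤ H` through the trivial coset is the singleton of the
trivial coset. -/
lemma aux_orbit_one {G : Type*} [Group G] (H H' : Subgroup G) (hle : H' ≤ H) :
    MulAction.orbit H' (QuotientGroup.mk (s := H) (1 : G)) =
      {QuotientGroup.mk (s := H) (1 : G)} := by
  ext z
  constructor
  · rintro ⟨⟨h, hh⟩, rfl⟩
    have h1 : (⟨h, hh⟩ : H') • (QuotientGroup.mk (s := H) (1 : G)) =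
        QuotientGroup.mk (s := H) (h * 1) := rfl
    show (⟨h, hh⟩ : H') • (QuotientGroup.mk (s := H) (1 : G)) ∈ _
    rw [h1]
    refine Set.mem_singleton_iff.mpr (QuotientGroup.eq.mpr ?_)
    simpa using H.inv_mem (hle hh)
  · rintro rfl
    exact ⟨1, one_smul _ _⟩

lemma aux_fixedField_sup {K N : Type*} [Field K] [Field N] [Algebra K N]
    (H1 H2 : Subgroup (N ≃ₐ[K] N)) :
    IntermediateField.fixedField (H1 ⊔ H2) =
      IntermediateField.fixedField H1 ⊓ IntermediateField.fixedField H2 := by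
  ext x
  constructor
  · intro hx
    exact ⟨fun g => hx ⟨g.1, le_sup_left (a := H1) g.2⟩,
           fun g => hx ⟨g.1, le_sup_right (a := H1) g.2⟩⟩
  · rintro ⟨hx1, hx2⟩ ⟨g, hg⟩
    have hle : H1 ⊔ H2 ≤ MulAction.stabilizer (N ≃ₐ[K] N) x :=
      sup_le (fun a ha => hx1 ⟨a, ha⟩) (fun a ha => hx2 ⟨a, ha⟩)
    exact hle hg

lemma aux_fixingSubgroup_bot {K N : Type*} [Field K] [Field N] [Algebra K N] :
    (⊥ : IntermediateField K N).fixingSubgroup = ⊤ := by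
  ext σ
  simp only [Subgroup.mem_top, iff_true, IntermediateField.mem_fixingSubgroup_iff]
  intro z hz
  obtain ⟨w, rfl⟩ := IntermediateField.mem_bot.mp hz
  exact σ.commutes w

lemma aux_sup_fixing_eq_top {K N : Type*} [Field K] [Field N] [Algebra K N]
    [FiniteDimensional K N] [IsGalois K N] {E1 E2 : IntermediateField K N}
    (h : E1 ⊓ E2 = ⊥) : E1.fixingSubgroup ⊔ E2.fixingSubgroup = ⊤ := by
  have h1 : IntermediateField.fixedField (E1.fixingSubgroup ⊔ E2.fixingSubgroup) = E1 ⊓ E2 := by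
    rw [aux_fixedField_sup, IsGalois.fixedField_fixingSubgroup, IsGalois.fixedField_fixingSubgroup]
  have h2 := IntermediateField.fixingSubgroup_fixedField
    (E1.fixingSubgroup ⊔ E2.fixingSubgroup)
  rw [h1, h, aux_fixingSubgroup_bot] at h2
  exact h2.symm

lemma aux_adjoin_stable {k K N : Type*} [Field k] [Field K] [Field N] [Algebra k K]
    [Algebra K N] [Algebra k N] [IsScalarTower k K N] (σ : N ≃ₐ[K] N) (w : N)
    (hw : w ∈ IntermediateField.adjoin K {x : N | IsAlgebraic k x}) :
    σ w ∈ IntermediateField.adjoin K {x : N | IsAlgebraic k x} := by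
  have hle : (IntermediateField.adjoin K {x : N | IsAlgebraic k x}).map σ.toAlgHom ≤
      IntermediateField.adjoin K {x : N | IsAlgebraic k x} := by
    rw [IntermediateField.adjoin_map]
    apply IntermediateField.adjoin.mono
    rintro _ ⟨w', hw', rfl⟩
    exact hw'.algHom ((σ.toAlgHom).restrictScalars k)
  exact hle ⟨w, hw, rfl⟩

lemma aux_normal {k K N : Type*} [Field k] [Field K] [Field N] [Algebra k K]
    [Algebra K N] [Algebra k N] [IsScalarTower k K N] :
    (IntermediateField.adjoin K {x : N | IsAlgebraic k x}).fixingSubgroup.Normal := by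
  constructor
  intro g hg τ
  rw [IntermediateField.mem_fixingSubgroup_iff] at hg ⊢
  intro z hz
  have h1 := aux_adjoin_stable (k := k) τ⁻¹ z hz
  show τ (g (τ⁻¹ z)) = z
  rw [hg _ h1]
  show τ (τ.symm z) = z
  exact τ.apply_symm_apply z

open IntermediateField in
lemma aux_inf_bot {k K N : Type*} [Field k] [Finite k] [Field K] [Field N] [Algebra k K]
    [Algebra K N] [Algebra k N] [IsScalarTower k K N] [FiniteDimensional K N]
    (L' : IntermediateField K N)
    (halg' : ∀ y : N, IsAlgebraic k y → y ∈ L' → ∃ c : k, algebraMap k N c = y) :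
    IntermediateField.adjoin K {x : N | IsAlgebraic k x} ⊓ L' = ⊥ := by
  classical
  have halgK : ∀ y : N, IsAlgebraic k y → y ∈ Set.range (algebraMap K N) →
      ∃ c : k, algebraMap k N c = y := by
    rintro y hy ⟨w, rfl⟩
    exact halg' _ hy (L'.algebraMap_mem w)
  -- the set of algebraic elements is a finite subfield
  have hSfin : {x : N | IsAlgebraic k x}.Finite := aux_S_finite halgK
  set SF : IntermediateField k N := algebraicClosure k N with hSF
  have hfin2 : (SF : Set N).Finite :=
    hSfin.subset (fun x hx => mem_algebraicClosure_iff.mp hx)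
  haveI : Finite ↥SF := hfin2.to_subtype
  obtain ⟨ζ, hζ⟩ := IsCyclic.exists_generator (α := (↥SF)ˣ)
  set α : N := ((ζ : ↥SF) : N) with hα
  have hαS : IsAlgebraic k α := mem_algebraicClosure_iff.mp (ζ : ↥SF).2
  have hKint : IsIntegral K α := IsIntegral.of_finite K α
  -- the adjoin is generated by α
  have hFα : IntermediateField.adjoin K {x : N | IsAlgebraic k x} = K⟮α⟯ := by
    apply le_antisymm
    · rw [IntermediateField.adjoin_le_iff]
      intro s hs
      have hs' : IsAlgebraic k s := hs
      set s' : ↥SF := ⟨s, mem_algebraicClosure_iff.mpr hs'⟩ with hs'def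
      by_cases h0 : s' = 0
      · have : s = 0 := congrArg Subtype.val h0
        rw [this]
        exact zero_mem _
      · obtain ⟨j, hj⟩ := Subgroup.mem_zpowers_iff.mp (hζ (Units.mk0 s' h0))
        have h1 : ((ζ : ↥SF) : N) ^ j = s := by
          have h2 : ((ζ ^ j : (↥SF)ˣ) : ↥SF) = s' := by rw [hj]; rfl
          rw [Units.val_zpow_eq_zpow_val] at h2
          have h3 := congrArg (SF.val) h2
          rw [map_zpow₀] at h3
          exact h3
        rw [← h1]
        exact K⟮α⟯.toSubfield.zpow_mem (IntermediateField.mem_adjoin_simple_self K α) j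
    · rw [IntermediateField.adjoin_simple_le_iff]
      exact IntermediateField.subset_adjoin K _ hαS
  -- degrees of minimal polynomials over L' and over K agree
  letI : Algebra k ↥L' := ((algebraMap K ↥L').comp (algebraMap k K)).toAlgebra
  haveI : IsScalarTower k ↥L' N := IsScalarTower.of_algebraMap_eq (fun c => by
    show algebraMap k N c = algebraMap ↥L' N ((algebraMap K ↥L') (algebraMap k K c))
    rw [← IsScalarTower.algebraMap_apply K ↥L' N, ← IsScalarTower.algebraMap_apply k K N])
  have hd1 : (minpoly ↥L' α).natDegree = (minpoly k α).natDegree := by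
    apply aux_minpoly_natDegree_eq _ hαS
    rintro y hy ⟨w, rfl⟩
    exact halg' _ hy w.2
  have hd2 : (minpoly K α).natDegree = (minpoly k α).natDegree :=
    aux_minpoly_natDegree_eq halgK hαS
  -- linear disjointness via the power basis
  have hli : LinearIndependent ↥L'
      (fun i : Fin (minpoly K α).natDegree => α ^ (i : ℕ)) := by
    have h := linearIndependent_pow (K := ↥L') (S := N) α
    rw [hd1, ← hd2] at h
    exact h
  have hLD : L'.LinearDisjoint K⟮α⟯ := by
    apply IntermediateField.LinearDisjoint.of_basis_right
      (b := (IntermediateField.adjoin.powerBasis hKint).basis)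
    have heq : (K⟮α⟯.val ∘ (IntermediateField.adjoin.powerBasis hKint).basis) =
        fun i : Fin (minpoly K α).natDegree => α ^ (i : ℕ) := by
      funext i
      simp only [Function.comp_apply, PowerBasis.coe_basis,
        IntermediateField.adjoin.powerBasis_gen, map_pow]
      rw [show K⟮α⟯.val (IntermediateField.AdjoinSimple.gen K α) = α from rfl]
    rw [heq]
    exact hli
  rw [hFα, inf_comm]
  exact hLD.inf_eq_bot



/-- Lemma `lenstra`, translated to Galois groups.
`L/K` finite separable with `F_q ⊆ K`, Galois closure `N`, such that `F_q` is
algebraically closed in `L` but not in `L·σ(L)` for any non-identity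
`K`-embedding `σ : L → N` (the Lenstra property). With
`A = Gal(N/K)`, `G = Gal(N/F_{q^ℓ}·K)`, `A1 = Gal(N/L)`,
`G1 = Gal(N/F_{q^ℓ}·L)` (where `F_{q^ℓ}` is the algebraic closure of `F_q`
in `N`), the coset `{A1}` is the unique orbit on `A/A1` which is both an
`A1`-orbit and a `G1`-orbit. -/
theorem stmt18 {k K L N : Type} [Field k] [Finite k] [Field K] [Field L]
    [Field N] [Algebra k K] [Algebra k L] [Algebra k N]
    [Algebra K L] [Algebra K N] [Algebra L N]
    [IsScalarTower k K L] [IsScalarTower k K N] [IsScalarTower K L N]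
    [FiniteDimensional K L] [Algebra.IsSeparable K L]
    [IsGalois K N] (hclosure : normalClosure K L N = ⊤)
    (halg : ∀ x : L, IsAlgebraic k x → ∃ c : k, algebraMap k L c = x)
    (hLen : ∀ σ : L →ₐ[K] N, σ ≠ IsScalarTower.toAlgHom K L N →
      ∃ x ∈ ((IsScalarTower.toAlgHom K L N).fieldRange ⊔ σ.fieldRange),
        IsAlgebraic k x ∧ ∀ c : k, algebraMap k N c ≠ x) :
    ∀ s : Set ((N ≃ₐ[K] N) ⧸
        (IsScalarTower.toAlgHom K L N).fieldRange.fixingSubgroup),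
      ((∃ x, s = MulAction.orbit
          ((IsScalarTower.toAlgHom K L N).fieldRange.fixingSubgroup) x) ∧
       (∃ x, s = MulAction.orbit
          (((IsScalarTower.toAlgHom K L N).fieldRange ⊔
            IntermediateField.adjoin K {x : N | IsAlgebraic k x}).fixingSubgroup) x))
      ↔ s = {QuotientGroup.mk (s := (IsScalarTower.toAlgHom K L N).fieldRange.fixingSubgroup) (1 : N ≃ₐ[K] N)} := by
  classical
  haveI hkLN : IsScalarTower k L N := IsScalarTower.of_algebraMap_eq (fun c => by
    rw [IsScalarTower.algebraMap_apply k K N c, IsScalarTower.algebraMap_apply K L N,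
      ← IsScalarTower.algebraMap_apply k K L])
  haveI : FiniteDimensional K N := by
    have h1 : FiniteDimensional K (normalClosure K L N) := inferInstance
    rw [hclosure] at h1
    exact Module.Finite.equiv (IntermediateField.topEquiv (F := K) (E := N)).toLinearEquiv
  set L' : IntermediateField K N := (IsScalarTower.toAlgHom K L N).fieldRange with hL'
  set S : Set N := {x : N | IsAlgebraic k x} with hS
  set F : IntermediateField K N := IntermediateField.adjoin K S with hF
  have hcoe : ∀ l : L, (IsScalarTower.toAlgHom K L N) l = algebraMap L N l := fun l => rfl
  have halg' : ∀ y : N, IsAlgebraic k y → y ∈ L' → ∃ c : k, algebraMap k N c = y := by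
    intro y hy hyL
    obtain ⟨l, rfl⟩ := hyL
    have hl : IsAlgebraic k l := (isAlgebraic_algebraMap_iff (algebraMap L N).injective).mp hy
    obtain ⟨c, hc⟩ := halg l hl
    refine ⟨c, ?_⟩
    rw [IsScalarTower.algebraMap_apply k L N, hc]
    rfl
  have hinf : F ⊓ L' = ⊥ := aux_inf_bot L' halg'
  haveI hnormal : F.fixingSubgroup.Normal := aux_normal
  have htop : F.fixingSubgroup ⊔ L'.fixingSubgroup = ⊤ := aux_sup_fixing_eq_top hinf
  intro s
  constructor
  · rintro ⟨⟨x1, hs1⟩, ⟨x2, hs2⟩⟩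
    have hx2s : x2 ∈ s := hs2 ▸ MulAction.mem_orbit_self x2
    have hs1' : s = MulAction.orbit L'.fixingSubgroup x2 :=
      hs1.trans (MulAction.orbit_eq_iff.mpr (hs1 ▸ hx2s)).symm
    obtain ⟨σt, rfl⟩ := QuotientGroup.mk_surjective x2
    by_cases hσ : ∀ l : L, σt (algebraMap L N l) = algebraMap L N l
    · -- the trivial coset case
      have hmem : σt ∈ L'.fixingSubgroup := by
        rw [IntermediateField.mem_fixingSubgroup_iff]
        rintro z ⟨l, rfl⟩
        exact hσ l
      have hmk : (QuotientGroup.mk σt :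
          (N ≃ₐ[K] N) ⧸ L'.fixingSubgroup) = QuotientGroup.mk 1 := by
        apply QuotientGroup.eq.mpr
        simpa using L'.fixingSubgroup.inv_mem hmem
      rw [hs1', hmk, aux_orbit_one _ _ le_rfl]
    · exfalso
      set σ : L →ₐ[K] N := (σt.toAlgHom).comp (IsScalarTower.toAlgHom K L N) with hσdef
      have hσne : σ ≠ IsScalarTower.toAlgHom K L N := by
        intro h
        apply hσ
        intro l
        have h2 := AlgHom.congr_fun h l
        rw [hσdef] at h2
        simpa [hcoe] using h2
      obtain ⟨x, hxmem, hxalg, hxne⟩ := hLen σ hσne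
      have hxF : x ∈ F := IntermediateField.subset_adjoin K S hxalg
      have hfix : ∀ τ : N ≃ₐ[K] N, τ x = x := by
        intro τ
        have hτ : τ ∈ ((F.fixingSubgroup : Set (N ≃ₐ[K] N)) *
            (L'.fixingSubgroup : Set (N ≃ₐ[K] N))) := by
          rw [← Subgroup.normal_mul, htop]
          simp
        obtain ⟨g, hg, a, ha, rfl⟩ := hτ
        have hmem2 : (⟨a, ha⟩ : L'.fixingSubgroup) • (QuotientGroup.mk σt :
              (N ≃ₐ[K] N) ⧸ L'.fixingSubgroup) ∈
            MulAction.orbit (L' ⊔ F).fixingSubgroup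
              (QuotientGroup.mk σt : (N ≃ₐ[K] N) ⧸ L'.fixingSubgroup) := by
          rw [← hs2, hs1']
          exact MulAction.mem_orbit _ _
        obtain ⟨g1, hg1eq⟩ := hmem2
        have heq : (QuotientGroup.mk ((g1 : N ≃ₐ[K] N) * σt) :
            (N ≃ₐ[K] N) ⧸ L'.fixingSubgroup) = QuotientGroup.mk (a * σt) := hg1eq
        have hy0mem : σt⁻¹ * (((g1 : N ≃ₐ[K] N))⁻¹ * a) * σt ∈ L'.fixingSubgroup := by
          have h3 := QuotientGroup.eq.mp heq
          simpa [mul_assoc, mul_inv_rev] using h3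
        have hg1A1 : (g1 : N ≃ₐ[K] N) ∈ L'.fixingSubgroup :=
          IntermediateField.fixingSubgroup_le le_sup_left g1.2
        have hg1F : (g1 : N ≃ₐ[K] N) ∈ F.fixingSubgroup :=
          IntermediateField.fixingSubgroup_le le_sup_right g1.2
        set y : N ≃ₐ[K] N := ((g1 : N ≃ₐ[K] N))⁻¹ * a with hy
        have hyA1 : y ∈ L'.fixingSubgroup :=
          L'.fixingSubgroup.mul_mem (L'.fixingSubgroup.inv_mem hg1A1) ha
        have hyx : y x = x := by
          have hyL'fix : ∀ z ∈ L', y z = z :=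
            (IntermediateField.mem_fixingSubgroup_iff _ _).mp hyA1
          have hyσfix : ∀ z ∈ σ.fieldRange, y z = z := by
            rintro z ⟨l, rfl⟩
            have h7 : (σt⁻¹ * y * σt) (algebraMap L N l) = algebraMap L N l := by
              apply (IntermediateField.mem_fixingSubgroup_iff _ _).mp hy0mem
              exact ⟨l, rfl⟩
            have h8 : y * σt = σt * (σt⁻¹ * y * σt) := by group
            show y (σt (algebraMap L N l)) = σt (algebraMap L N l)
            calc y (σt (algebraMap L N l)) = (y * σt) (algebraMap L N l) := rfl
              _ = (σt * (σt⁻¹ * y * σt)) (algebraMap L N l) := by rw [h8]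
              _ = σt ((σt⁻¹ * y * σt) (algebraMap L N l)) := rfl
              _ = σt (algebraMap L N l) := by rw [h7]
          have hle : L' ⊔ σ.fieldRange ≤ fixedPts y :=
            sup_le (fun z hz => hyL'fix z hz) (fun z hz => hyσfix z hz)
          exact hle hxmem
        have hax : a x = x := by
          have h1 : a = (g1 : N ≃ₐ[K] N) * y := by rw [hy]; group
          rw [h1]
          show (g1 : N ≃ₐ[K] N) (y x) = x
          rw [hyx]
          exact (IntermediateField.mem_fixingSubgroup_iff _ _).mp hg1F x hxF
        show g (a x) = x
        rw [hax]
        exact (IntermediateField.mem_fixingSubgroup_iff _ _).mp hg x hxF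
      have hxbot : x ∈ (⊥ : IntermediateField K N) := by
        have h1 : x ∈ IntermediateField.fixedField (⊤ : Subgroup (N ≃ₐ[K] N)) := by
          rintro ⟨τ, -⟩
          exact hfix τ
        have h2 : IntermediateField.fixedField (⊤ : Subgroup (N ≃ₐ[K] N)) =
            (⊥ : IntermediateField K N) := by
          rw [← aux_fixingSubgroup_bot (K := K) (N := N), IsGalois.fixedField_fixingSubgroup]
        rwa [h2] at h1
      obtain ⟨w, hw⟩ := IntermediateField.mem_bot.mp hxbot
      rw [← hw] at hxalg
      have hwalg : IsAlgebraic k w :=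
        (isAlgebraic_algebraMap_iff (algebraMap K N).injective).mp hxalg
      have hwL : IsAlgebraic k (algebraMap K L w) := hwalg.algebraMap
      obtain ⟨c, hc⟩ := halg _ hwL
      apply hxne c
      rw [IsScalarTower.algebraMap_apply k L N, hc, ← IsScalarTower.algebraMap_apply K L N, hw]
  · rintro rfl
    refine ⟨⟨_, (aux_orbit_one L'.fixingSubgroup L'.fixingSubgroup le_rfl).symm⟩,
      ⟨_, (aux_orbit_one L'.fixingSubgroup (L' ⊔ F).fixingSubgroup
        (IntermediateField.fixingSubgroup_le le_sup_left)).symm⟩⟩
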